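/- arXiv:quant-ph/0312209 — 4 statements merged into one kernel-verified Lean document; each statement's English description precedes it below -/
import Mathlib

section
/- Teleportation identity: for every ψ ∈ ℂ², (B† ⊗ I₂)(ψ ⊗ EPR) = (1/2)·∑_{m₁,m₂ ∈ {0,1}} |m₁⟩ ⊗ |m₂⟩ ⊗ (X^{m₂} Z^{m₁} ψ), where X = [[0,1],[1,0]] and Z = [[1,0],[0,−1]]. -/
open Matrix Kronecker

noncomputable def Hgate : Matrix (Fin 2) (Fin 2) ℂ :=
  ((1 / Real.sqrt 2 : ℝ) : ℂ) • !![1, 1; 1, -1]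

def Xgate : Matrix (Fin 2) (Fin 2) ℂ := !![0, 1; 1, 0]

def Zgate : Matrix (Fin 2) (Fin 2) ℂ := !![1, 0; 0, -1]

/-- The CNOT gate: `CNOT(|a⟩⊗|b⟩) = |a⟩⊗|a⊕b⟩`. -/
def CNOT : Matrix (Fin 2 × Fin 2) (Fin 2 × Fin 2) ℂ :=
  fun p q => if p = (q.1, q.1 + q.2) then 1 else 0

/-- The Bell gate `B = CNOT * (H ⊗ I₂)`. -/
noncomputable def Bgate : Matrix (Fin 2 × Fin 2) (Fin 2 × Fin 2) ℂ :=
  CNOT * (Hgate ⊗ₖ (1 : Matrix (Fin 2) (Fin 2) ℂ))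

/-- `B†`, the conjugate transpose of the Bell gate. -/
noncomputable def Bdag : Matrix (Fin 2 × Fin 2) (Fin 2 × Fin 2) ℂ := Bgateᴴ

/-- The computational basis state `|a⟩` of one qubit. -/
def ket (a : Fin 2) : Fin 2 → ℂ := fun i => if i = a then 1 else 0

/-- The EPR state `B(|0⟩⊗|0⟩) = (|00⟩+|11⟩)/√2`. -/
noncomputable def EPR : Fin 2 × Fin 2 → ℂ :=
  Bgate.mulVec fun p => ket 0 p.1 * ket 0 p.2

/-!
Since `H` and `CNOT` are self-adjoint, `B† = (H ⊗ I) · CNOT`. The EPR state has amplitude `1/√2`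
exactly on `|yy⟩`, so `CNOT` sends `ψ ⊗ EPR` to the vector with amplitude `ψ x / √2 · [x + b = c]`
at `|x b c⟩`, and `H` on the first qubit then gives amplitude `½ (-1)^{a(b+c)} ψ (b + c)` at
`|a b c⟩`. This is the `c`-th coordinate of `½ X^b Z^a ψ`: `Z^a` multiplies the `x`-th coordinate
by `(-1)^{ax}` and `X^b` shifts coordinates by `b`.
-/

theorem Matrix.kronecker_one_mulVec_apply {R l m n : Type*} [Semiring R] [Fintype m] [Fintype n]
    [DecidableEq n] (A : Matrix l m R) (v : m × n → R) (p : l) (c : n) :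
    (A ⊗ₖ (1 : Matrix n n R)).mulVec v (p, c) = A.mulVec (fun q => v (q, c)) p := by
  simp [mulVec, dotProduct, Fintype.sum_prod_type, one_apply]

-- `CharTwo.add_eq_iff_eq_add` does not apply: the ring structure on `Fin 2` is only scoped.
theorem Fin.two_add_eq_iff_eq_add {x y z : Fin 2} : x + y = z ↔ x = z + y := by
  revert x y z; decide

theorem ofReal_sqrt_two_inv_mul_self :
    ((Real.sqrt 2 : ℝ) : ℂ)⁻¹ * ((Real.sqrt 2 : ℝ) : ℂ)⁻¹ = 2⁻¹ := by
  rw [← mul_inv, ← Complex.ofReal_mul, Real.mul_self_sqrt zero_le_two]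
  norm_num

theorem Hgate_apply (x y : Fin 2) :
    Hgate x y = ((Real.sqrt 2 : ℝ) : ℂ)⁻¹ * (-1) ^ (x.val * y.val) := by
  fin_cases x <;> fin_cases y <;> simp [Hgate]

theorem Hgate_conjTranspose : Hgateᴴ = Hgate := by
  ext x y
  simp [Hgate_apply, mul_comm x.val]

theorem CNOT_conjTranspose : CNOTᴴ = CNOT := by
  ext p q
  fin_cases p <;> fin_cases q <;> simp [CNOT]

theorem Bdag_eq : Bdag = (Hgate ⊗ₖ (1 : Matrix (Fin 2) (Fin 2) ℂ)) * CNOT := by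
  rw [Bdag, Bgate, conjTranspose_mul, conjTranspose_kronecker, Hgate_conjTranspose,
    conjTranspose_one, CNOT_conjTranspose]

theorem CNOT_mulVec_apply (v : Fin 2 × Fin 2 → ℂ) (x y : Fin 2) :
    CNOT.mulVec v (x, y) = v (x, x + y) := by
  have hrow (q : Fin 2 × Fin 2) : (x, y) = (q.1, q.1 + q.2) ↔ q = (x, x + y) := by
    revert q x y; decide
  simp [mulVec, dotProduct, CNOT, hrow]

theorem EPR_apply (y c : Fin 2) :
    EPR (y, c) = ((Real.sqrt 2 : ℝ) : ℂ)⁻¹ * if y = c then 1 else 0 := by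
  rw [EPR, Bgate, ← mulVec_mulVec, CNOT_mulVec_apply, kronecker_one_mulVec_apply]
  simp [mulVec, dotProduct, ket, Hgate_apply, Fin.two_add_eq_iff_eq_add]

theorem Xgate_pow_mulVec_apply (m c : Fin 2) (φ : Fin 2 → ℂ) :
    (Xgate ^ (m : ℕ)).mulVec φ c = φ (c + m) := by
  fin_cases m <;> fin_cases c <;> simp [Xgate, mulVec, dotProduct]

theorem Zgate_pow_mulVec_apply (m x : Fin 2) (φ : Fin 2 → ℂ) :
    (Zgate ^ (m : ℕ)).mulVec φ x = (-1) ^ (m.val * x.val) * φ x := by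
  fin_cases m <;> fin_cases x <;> simp [Zgate, mulVec, dotProduct]

/-- Qubits are grouped as `((q, r₁), r₂)` so that `B†` acts on the first two. -/
theorem teleportation_identity (ψ : Fin 2 → ℂ) :
    (Bdag ⊗ₖ (1 : Matrix (Fin 2) (Fin 2) ℂ)).mulVec
        (fun p : (Fin 2 × Fin 2) × Fin 2 => ψ p.1.1 * EPR (p.1.2, p.2))
      = (1 / 2 : ℂ) • ∑ m₁ : Fin 2, ∑ m₂ : Fin 2,
          (fun p : (Fin 2 × Fin 2) × Fin 2 =>
            ket m₁ p.1.1 * ket m₂ p.1.2 *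
              ((Xgate ^ (m₂ : ℕ) * Zgate ^ (m₁ : ℕ)).mulVec ψ) p.2) := by
  funext ⟨⟨a, b⟩, c⟩
  rw [kronecker_one_mulVec_apply, Bdag_eq, ← mulVec_mulVec, kronecker_one_mulVec_apply]
  simp only [CNOT_mulVec_apply, EPR_apply, Pi.smul_apply, Finset.sum_apply, ket,
    ← mulVec_mulVec, Xgate_pow_mulVec_apply, Zgate_pow_mulVec_apply]
  simp only [mulVec, dotProduct, Hgate_apply, Fin.two_add_eq_iff_eq_add, mul_ite, mul_one,
    mul_zero, Finset.sum_ite_eq', Finset.mem_univ, ↓reduceIte, one_div, ite_mul, one_mul,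
    zero_mul, Finset.sum_ite_eq, smul_eq_mul]
  linear_combination ((-1) ^ (a.val * (c + b).val) * ψ (c + b)) * ofReal_sqrt_two_inv_mul_self
end

section
/- Each Bell measurement outcome occurs with probability exactly 1/4, independently of the teleported state: let α be a finite type and Ψ : α × Fin 2 → ℂ. Let Φ : α × Fin 2 × Fin 2 × Fin 2 → ℂ be obtained from Ψ ⊗ EPR by applying B† to the pair consisting of the Ψ-qubit and the first EPR qubit. Then for every outcome (m₁, m₂) ∈ Fin 2 × Fin 2, ∑_{a, c} |Φ(a, m₁, m₂, c)|² = (1/4)·∑_{a, c} |Ψ(a, c)|². -/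
/-!
Writing `B (x, y) (q, r) = [y - x = r] · H x q` (CNOT only shifts the second index), the
state `B† (Ψ ⊗ EPR)` has amplitude `H (c - m₂) m₁ · H c 0 · Ψ (a, c - m₂)` at `(a, m₁, m₂, c)`.
Every entry of the Hadamard matrix has modulus `1/√2`, so the outcome `(m₁, m₂)` sees `Ψ`
translated by `m₂` in its last qubit and scaled by `1/4` in squared norm.
-/

open Matrix Kronecker

/-- The state obtained from `Ψ ⊗ EPR` (with the EPR pair on fresh qubits `r₁, r₂`)
by applying `B†` to the pair `(q, r₁)` and the identity elsewhere.  Coordinates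
are `(a, q, r₁, r₂)`. -/
noncomputable def teleported {α : Type*} [Fintype α] (Ψ : α × Fin 2 → ℂ) :
    α × Fin 2 × Fin 2 × Fin 2 → ℂ :=
  fun x => ∑ y : Fin 2 × Fin 2,
    Bdag (x.2.1, x.2.2.1) y * (Ψ (x.1, y.1) * EPR (y.2, x.2.2.2))

lemma star_Hgate_apply (i j : Fin 2) : star (Hgate i j) = Hgate i j := by
  fin_cases i <;> fin_cases j <;> simp [Hgate]

lemma norm_Hgate_apply_sq (i j : Fin 2) : ‖Hgate i j‖ ^ 2 = 1 / 2 := by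
  fin_cases i <;> fin_cases j <;> simp [Hgate]

lemma CNOT_mul_apply {ι : Type*} (M : Matrix (Fin 2 × Fin 2) ι ℂ) (x y : Fin 2) (j : ι) :
    (CNOT * M) (x, y) j = M (x, y - x) j := by
  rw [mul_apply, Finset.sum_eq_single (x, y - x)]
  · simp [CNOT]
  · rintro ⟨s, t⟩ - hne
    rw [CNOT, if_neg, zero_mul]
    rintro ⟨⟩
    exact hne (by simp)
  · simp

lemma Bgate_apply (x y q r : Fin 2) :
    Bgate (x, y) (q, r) = if y - x = r then Hgate x q else 0 := by
  rw [Bgate, CNOT_mul_apply, kroneckerMap_apply, one_apply, mul_ite, mul_one, mul_zero]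

lemma Bdag_apply (m₁ m₂ q r : Fin 2) :
    Bdag (m₁, m₂) (q, r) = if r - q = m₂ then Hgate q m₁ else 0 := by
  rw [Bdag, conjTranspose_apply, Bgate_apply, apply_ite star, star_Hgate_apply, star_zero]

lemma EPR_apply_s5 (s t : Fin 2) : EPR (s, t) = if t = s then Hgate s 0 else 0 := by
  rw [EPR, mulVec, dotProduct, Finset.sum_eq_single (0, 0)]
  · simp [Bgate_apply, ket, sub_eq_zero]
  · rintro ⟨q, r⟩ - hne
    simp only [ket] at hne ⊢
    grind
  · simp

lemma teleported_apply {α : Type*} [Fintype α] (Ψ : α × Fin 2 → ℂ) (a : α) (m₁ m₂ c : Fin 2) :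
    teleported Ψ (a, m₁, m₂, c) = Hgate (c - m₂) m₁ * Hgate c 0 * Ψ (a, c - m₂) := by
  rw [teleported, Fintype.sum_prod_type]
  simp only [Bdag_apply, EPR_apply_s5, mul_ite, mul_zero, ite_mul, zero_mul, sub_eq_iff_comm,
    Finset.sum_ite_eq, Finset.mem_univ, if_true]
  ring

/-- Each Bell measurement outcome `(m₁, m₂)` occurs with probability exactly `1/4`
times the squared norm of the teleported state, independently of that state. -/
theorem bell_measurement_prob {α : Type*} [Fintype α] (Ψ : α × Fin 2 → ℂ)
    (m₁ m₂ : Fin 2) :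
    ∑ a : α, ∑ c : Fin 2, ‖teleported Ψ (a, m₁, m₂, c)‖ ^ 2
      = (1 / 4 : ℝ) * ∑ a : α, ∑ c : Fin 2, ‖Ψ (a, c)‖ ^ 2 := by
  have hshift (a : α) : ∑ c : Fin 2, ‖Ψ (a, c - m₂)‖ ^ 2 = ∑ c : Fin 2, ‖Ψ (a, c)‖ ^ 2 :=
    Fintype.sum_equiv (Equiv.subRight m₂) _ _ fun _ => rfl
  simp_rw [teleported_apply, norm_mul, mul_pow, norm_Hgate_apply_sq, ← Finset.mul_sum, hshift]
  norm_num
end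

section
/- Inserting a teleportation module between two consecutive gates preserves the computation up to a factor 1/2 upon postselection: let ψ ∈ ℂ² and let U, V be unitary 2×2 complex matrices. Starting from ψ ⊗ EPR on qubits (1,2,3), apply U to qubit 1, then B† to qubits (1,2), then V to qubit 3; call the resulting state Φ : Fin 2 × Fin 2 × Fin 2 → ℂ. Then the vector c ↦ Φ(0, 0, c) equals (1/2)·(V · U · ψ). -/
open Matrix Kronecker

/-- The initial state `ψ ⊗ EPR` on qubits `(1,2,3)`. -/
noncomputable def step0 (ψ : Fin 2 → ℂ) : Fin 2 × Fin 2 × Fin 2 → ℂ :=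
  fun x => ψ x.1 * EPR (x.2.1, x.2.2)

/-- Apply `U` to qubit 1. -/
noncomputable def step1 (U : Matrix (Fin 2) (Fin 2) ℂ) (ψ : Fin 2 → ℂ) :
    Fin 2 × Fin 2 × Fin 2 → ℂ :=
  fun x => ∑ q : Fin 2, U x.1 q * step0 ψ (q, x.2.1, x.2.2)

/-- Then apply `B†` to qubits `(1,2)`. -/
noncomputable def step2 (U : Matrix (Fin 2) (Fin 2) ℂ) (ψ : Fin 2 → ℂ) :
    Fin 2 × Fin 2 × Fin 2 → ℂ :=
  fun x => ∑ y : Fin 2 × Fin 2, Bdag (x.1, x.2.1) y * step1 U ψ (y.1, y.2, x.2.2)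

/-- Finally apply `V` to qubit 3; this is the resulting state `Φ`. -/
noncomputable def step3 (V U : Matrix (Fin 2) (Fin 2) ℂ) (ψ : Fin 2 → ℂ) :
    Fin 2 × Fin 2 × Fin 2 → ℂ :=
  fun x => ∑ c : Fin 2, V x.2.2 c * step2 U ψ (x.1, x.2.1, c)

/-- Inserting a teleportation module between two consecutive unitary gates `U`, `V`
preserves the computation up to a factor `1/2` upon postselecting the Bell
measurement outcome `00`: the vector `c ↦ Φ(0,0,c)` equals `(1/2)·(V·U·ψ)`. -/
theorem teleportation_module_correct (ψ : Fin 2 → ℂ)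
    (U V : Matrix (Fin 2) (Fin 2) ℂ)
    (hU : U ∈ Matrix.unitaryGroup (Fin 2) ℂ)
    (hV : V ∈ Matrix.unitaryGroup (Fin 2) ℂ) :
    (fun c : Fin 2 => step3 V U ψ (0, 0, c)) = (1 / 2 : ℂ) • (V * U).mulVec ψ := by
  funext c
  simp only [step3, step2, step1, step0, EPR, Bdag, Bgate, CNOT, Hgate, ket,
    Fintype.sum_prod_type, Fin.sum_univ_two, Matrix.mulVec, dotProduct,
    Matrix.mul_apply, Matrix.conjTranspose_apply, Matrix.kroneckerMap_apply,
    Matrix.smul_apply, Matrix.one_apply, Pi.smul_apply, smul_eq_mul,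
    Matrix.cons_val', Matrix.cons_val_zero, Matrix.cons_val_one, Matrix.head_cons,
    Matrix.empty_val', Matrix.cons_val_fin_one, Matrix.head_fin_const,
    Matrix.of_apply, _root_.map_mul, _root_.map_one]
  norm_num
  ring_nf
  field_simp
  rw [mul_comm]
  rw [← Complex.ofReal_pow, Real.sq_sqrt (by norm_num)]
  norm_num
end

section
/- Rejecting-side correctness of the simulation algorithm: let (Ω, μ) be a probability space, ι a finite type, A : ι → Set Ω a family of measurable events, D ∈ ℕ with D ≥ 1, c : ι → Fin D, and t ∈ ℝ. Assume that for each color k, the subfamily of events {A i : c i = k} is mutually independent with respect to μ. If μ(⋂ i, A i) < 1 − D·t, then there exists k ∈ Fin D with ∏_{i : c i = k} μ(A i) < 1 − t. -/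
open MeasureTheory ProbabilityTheory

/-- Rejecting-side correctness of the simulation algorithm: if the events of each
color class are mutually independent and the probability that all events occur is
less than `1 − D·t`, then for some color `k` the product of the probabilities of
the events colored `k` is less than `1 − t`. -/
theorem simulation_reject_side {Ω : Type*} [MeasurableSpace Ω]
    (μ : Measure Ω) [IsProbabilityMeasure μ]
    {ι : Type*} [Fintype ι] (A : ι → Set Ω) (hA : ∀ i, MeasurableSet (A i))
    (D : ℕ) (hD : 1 ≤ D) (c : ι → Fin D) (t : ℝ)
    (hindep : ∀ k : Fin D, iIndepSet (fun i : {i // c i = k} => A i) μ)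
    (hrej : (μ (⋂ i, A i)).toReal < 1 - D * t) :
    ∃ k : Fin D,
      ∏ i ∈ Finset.univ.filter (fun i => c i = k), (μ (A i)).toReal < 1 - t := by
  by_contra h
  push_neg at h
  set B : Fin D → Set Ω := fun k => ⋂ i : {i // c i = k}, A (i : ι) with hB
  have hBmeas : ∀ k, MeasurableSet (B k) :=
    fun k => MeasurableSet.iInter fun i => hA i
  -- product formula
  have hBprod : ∀ k, (μ (B k)).toReal
      = ∏ i ∈ Finset.univ.filter (fun i => c i = k), (μ (A i)).toReal := by
    intro k
    have h1 : μ (B k) = ∏ i : {i // c i = k}, μ (A (i : ι)) := by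
      have := (hindep k).meas_biInter (Finset.univ)
      simpa [hB] using this
    rw [h1, ENNReal.toReal_prod]
    rw [Finset.prod_subtype (Finset.univ.filter (fun i => c i = k))
      (p := fun i => c i = k) (fun x => by simp) (fun i => (μ (A i)).toReal)]
  -- intersection decomposition
  have hInter : (⋂ i, A i) = ⋂ k, B k := by
    ext x
    simp only [Set.mem_iInter, hB]
    constructor
    · intro hx k i; exact hx i
    · intro hx i; exact hx (c i) ⟨i, rfl⟩
  -- measure bound
  have hfin : ∀ s : Set Ω, μ s ≠ ⊤ := fun s => (measure_lt_top μ s).ne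
  have key : 1 - ∑ k : Fin D, (1 - (μ (B k)).toReal) ≤ (μ (⋂ i, A i)).toReal := by
    have hcompl : μ ((⋂ k, B k)ᶜ) ≤ ∑ k : Fin D, μ ((B k)ᶜ) := by
      rw [Set.compl_iInter]
      exact measure_iUnion_fintype_le μ _
    have h2 : (μ ((⋂ k, B k)ᶜ)).toReal ≤ ∑ k : Fin D, (μ ((B k)ᶜ)).toReal := by
      rw [← ENNReal.toReal_sum (fun k _ => hfin _)]
      exact ENNReal.toReal_mono (by simp [hfin, ENNReal.sum_lt_top]) hcompl
    have h3 : (μ ((⋂ k, B k)ᶜ)).toReal = 1 - (μ (⋂ k, B k)).toReal := by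
      rw [prob_compl_eq_one_sub (MeasurableSet.iInter hBmeas)]
      rw [ENNReal.toReal_sub_of_le prob_le_one (by simp)]
      simp
    have h4 : ∀ k, (μ ((B k)ᶜ)).toReal = 1 - (μ (B k)).toReal := by
      intro k
      rw [prob_compl_eq_one_sub (hBmeas k)]
      rw [ENNReal.toReal_sub_of_le prob_le_one (by simp)]
      simp
    rw [hInter]
    have := h2
    rw [h3] at this
    simp_rw [h4] at this
    linarith
  -- combine
  have hsum : ∑ k : Fin D, (1 - (μ (B k)).toReal) ≤ D * t := by
    have : ∀ k : Fin D, (1 - (μ (B k)).toReal) ≤ t := by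
      intro k
      have := h k
      rw [← hBprod k] at this
      linarith
    calc ∑ k : Fin D, (1 - (μ (B k)).toReal) ≤ ∑ _k : Fin D, t :=
          Finset.sum_le_sum fun k _ => this k
      _ = D * t := by simp [mul_comm]
  linarith
end
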